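/- In a rotationally asymmetric configuration of finitely many distinct points on a circle, if there are exactly two undecided leaders, then they are not antipodal to each other. -/

import Mathlib

open Real
open scoped Classical

noncomputable section

/-- Clockwise angular distance from `p` to `q`, a real number in `[0, 2π)`. -/
def cw (p q : Real.Angle) : ℝ :=
  if 0 ≤ (q - p).toReal then (q - p).toReal else (q - p).toReal + 2 * π

/-- The sorted list of clockwise distances from `p` to the points of `S`. -/
def dists (S : Finset Real.Angle) (p : Real.Angle) : List ℝ :=
  (S.image (cw p)).sort (· ≤ ·)

/-- The clockwise angular-gap sequence of `p` with respect to the configuration `S`: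
the sequence of clockwise gaps between consecutive points, starting from `p`. -/
def gapSeq (S : Finset Real.Angle) (p : Real.Angle) : List ℝ :=
  List.zipWith (fun a b => a - b) ((dists S p).tail ++ [2 * π]) (dists S p)

/-- Lexicographic strict order on lists of reals. -/
def lexLt (a b : List ℝ) : Prop := List.Lex (· < ·) a b

/-- `L` is the true leader of `S`: its angular-gap sequence is lexicographically
strictly smallest. -/
def TrueLeader (S : Finset Real.Angle) (L : Real.Angle) : Prop :=
  L ∈ S ∧ ∀ r ∈ S, r ≠ L → lexLt (gapSeq S L) (gapSeq S r)

/-- `S` is rotationally asymmetric: no nontrivial rotation about the center fixes `S`. -/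
def RotAsym (S : Finset Real.Angle) : Prop :=
  ∀ θ : Real.Angle, θ ≠ 0 → S.image (· + θ) ≠ S

/-- The antipodal position of a point on the circle. -/
def antipode (p : Real.Angle) : Real.Angle := p + (π : Real.Angle)

/-- The hypothetical configuration in which the antipode of `r` is unoccupied. -/
def C0 (S : Finset Real.Angle) (r : Real.Angle) : Finset Real.Angle := S.erase (antipode r)

/-- The hypothetical configuration in which the antipode of `r` is occupied. -/
def C1 (S : Finset Real.Angle) (r : Real.Angle) : Finset Real.Angle := insert (antipode r) S

/-- `r` is an undecided leader: both hypothetical configurations are rotationally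
asymmetric and `r` is the true leader of exactly one of them. -/
def Undecided (S : Finset Real.Angle) (r : Real.Angle) : Prop :=
  r ∈ S ∧ RotAsym (C0 S r) ∧ RotAsym (C1 S r) ∧
    Xor' (TrueLeader (C0 S r) r) (TrueLeader (C1 S r) r)

/-- `r` is a cognizant leader: `r` is the true leader in every consistent
(hypothetical) configuration. -/
def Cognizant (S : Finset Real.Angle) (r : Real.Angle) : Prop :=
  r ∈ S ∧ (RotAsym (C0 S r) → TrueLeader (C0 S r) r) ∧
    (RotAsym (C1 S r) → TrueLeader (C1 S r) r)

/-- An expected leader is a cognizant leader or an undecided leader. -/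
def ExpectedLeader (S : Finset Real.Angle) (r : Real.Angle) : Prop :=
  Cognizant S r ∨ Undecided S r

/-!
Compare positions through their *views*: the view of `p` is the set of clockwise distances
from `p` to the robots. One gap sequence is lexicographically smaller than another exactly
when the first distance at which the two views differ is occupied in the first one (`Beats`).

Suppose `r` and `r + π` are both undecided. Both antipodes are occupied, so `C₁ = S` for each
of them. A true leader of `S` whose antipode is occupied stays the leader when that antipode
is removed, so each of `r`, `r + π` leads `S` minus the other one but does not lead `S`.
Rotational asymmetry makes the two views distinct; say the view of `r` beats that of `r + π`.
Against a point in its far half, a win of `r` survives putting `r + π` back. A point in the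
near half of `r` lies in the far half of `r + π`, so `r + π` beats it, and then so does `r`.
Thus `r` leads `S`, a contradiction.
-/

section Beats

variable {α : Type*} [LinearOrder α] {F G H : Finset α}

def Beats (F G : Finset α) : Prop :=
  ∃ β ∈ F, β ∉ G ∧ ∀ t < β, (t ∈ F ↔ t ∈ G)

theorem Beats.asymm (h : Beats F G) (h' : Beats G F) : False := by
  obtain ⟨a, haF, haG, ha⟩ := h
  obtain ⟨b, hbG, hbF, hb⟩ := h'
  rcases lt_trichotomy a b with hab | rfl | hab
  · exact haG ((hb a hab).2 haF)
  · exact haG hbG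
  · exact hbF ((ha b hab).2 hbG)

theorem Beats.trans (h : Beats F G) (h' : Beats G H) : Beats F H := by
  obtain ⟨a, haF, haG, ha⟩ := h
  obtain ⟨b, hbG, hbH, hb⟩ := h'
  rcases lt_trichotomy a b with hab | rfl | hab
  · exact ⟨a, haF, fun haH => haG ((hb a hab).2 haH),
      fun t ht => (ha t ht).trans (hb t (ht.trans hab))⟩
  · exact absurd hbG haG
  · exact ⟨b, (ha b hab).2 hbG, hbH, fun t ht => (ha t (ht.trans hab)).trans (hb t ht)⟩

theorem Beats.total (h : F ≠ G) : Beats F G ∨ Beats G F := by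
  have hne : (symmDiff F G).Nonempty := Finset.symmDiff_nonempty.2 h
  set β := (symmDiff F G).min' hne
  have hagree : ∀ t < β, (t ∈ F ↔ t ∈ G) := fun t ht => by
    by_contra hdiff
    have : t ∈ symmDiff F G := Finset.mem_symmDiff.2 (by tauto)
    exact (Finset.min'_le _ t this).not_gt ht
  rcases Finset.mem_symmDiff.1 ((symmDiff F G).min'_mem hne) with ⟨hF, hG⟩ | ⟨hG, hF⟩
  · exact .inl ⟨β, hF, hG, hagree⟩
  · exact .inr ⟨β, hG, hF, fun t ht => (hagree t ht).symm⟩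

theorem beats_of_min'_lt (hF : F.Nonempty) (hG : G.Nonempty) (h : F.min' hF < G.min' hG) :
    Beats F G :=
  ⟨_, F.min'_mem hF, fun hmem => (G.min'_le _ hmem).not_gt h, fun _ ht =>
    iff_of_false (fun hmem => (F.min'_le _ hmem).not_gt ht)
      (fun hmem => (G.min'_le _ hmem).not_gt (ht.trans h))⟩

theorem beats_erase_iff {c : α} (hcF : c ∈ F) (hcG : c ∈ G) :
    Beats (F.erase c) (G.erase c) ↔ Beats F G := by
  constructor
  · rintro ⟨β, hβF, hβG, hβ⟩
    have hβc : β ≠ c := Finset.ne_of_mem_erase hβF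
    refine ⟨β, Finset.mem_of_mem_erase hβF, fun h => hβG (Finset.mem_erase.2 ⟨hβc, h⟩),
      fun t ht => ?_⟩
    rcases eq_or_ne t c with rfl | htc
    · exact iff_of_true hcF hcG
    · simpa [htc] using hβ t ht
  · rintro ⟨β, hβF, hβG, hβ⟩
    have hβc : β ≠ c := fun h => hβG (h ▸ hcG)
    refine ⟨β, Finset.mem_erase.2 ⟨hβc, hβF⟩, fun h => hβG (Finset.mem_of_mem_erase h),
      fun t ht => ?_⟩
    simp only [Finset.mem_erase, hβ t ht]

theorem sort_eq_min'_cons (hF : F.Nonempty) :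
    F.sort (· ≤ ·) = F.min' hF :: (F.erase (F.min' hF)).sort (· ≤ ·) := by
  conv_lhs => rw [← Finset.insert_erase (F.min'_mem hF)]
  exact Finset.sort_insert _ (fun b hb => F.min'_le b (Finset.mem_of_mem_erase hb))
    (Finset.notMem_erase _ _)

theorem lex_cons_cons_iff {a b : α} {u v : List α} :
    List.Lex (· < ·) (a :: u) (b :: v) ↔ a < b ∨ a = b ∧ List.Lex (· < ·) u v := by
  constructor
  · intro h
    cases h with
    | cons h => exact .inr ⟨rfl, h⟩
    | rel h => exact .inl h
  · rintro (h | ⟨rfl, h⟩)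
    · exact .rel h
    · exact .cons h

theorem lex_sort_iff_beats (h : F.card = G.card) :
    List.Lex (· < ·) (F.sort (· ≤ ·)) (G.sort (· ≤ ·)) ↔ Beats F G := by
  induction hn : F.card generalizing F G with
  | zero =>
    obtain rfl := Finset.card_eq_zero.1 hn
    obtain rfl := Finset.card_eq_zero.1 (h.symm.trans hn)
    exact iff_of_false (by simp) fun hb => hb.asymm hb
  | succ n ih =>
    have hF : F.Nonempty := Finset.card_pos.1 (by omega)
    have hG : G.Nonempty := Finset.card_pos.1 (by omega)
    rw [sort_eq_min'_cons hF, sort_eq_min'_cons hG, lex_cons_cons_iff]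
    rcases lt_trichotomy (F.min' hF) (G.min' hG) with hlt | heq | hgt
    · exact iff_of_true (.inl hlt) (beats_of_min'_lt hF hG hlt)
    · have hmF : G.min' hG ∈ F := heq ▸ F.min'_mem hF
      rw [heq, ← beats_erase_iff hmF (G.min'_mem hG), ← ih (by
        rw [Finset.card_erase_of_mem hmF, Finset.card_erase_of_mem (G.min'_mem hG), h])
        (by rw [Finset.card_erase_of_mem hmF, hn]; rfl)]
      simp
    · refine iff_of_false ?_ fun hb => hb.asymm (beats_of_min'_lt hG hF hgt)
      rintro (h | ⟨h, -⟩) <;> order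

end Beats

def gaps {α : Type*} [Sub α] (c : α) (l : List α) : List α :=
  List.zipWith (fun a b => a - b) (l.tail ++ [c]) l

theorem lex_gaps_iff {α : Type*} [AddCommGroup α] [LinearOrder α] [IsOrderedAddMonoid α]
    (c a : α) {t₁ t₂ : List α} (h : t₁.length = t₂.length) :
    List.Lex (· < ·) (gaps c (a :: t₁)) (gaps c (a :: t₂)) ↔
      List.Lex (· < ·) (a :: t₁) (a :: t₂) := by
  induction t₁ generalizing a t₂ with
  | nil =>
    obtain rfl := List.length_eq_zero_iff.1 h.symm
    simp [gaps]
  | cons b t₁ ih =>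
    obtain ⟨b', t₂, rfl⟩ := List.exists_cons_of_length_eq_add_one h.symm
    change List.Lex _ ((b - a) :: gaps c (b :: t₁)) ((b' - a) :: gaps c (b' :: t₂)) ↔ _
    rw [lex_cons_cons_iff, List.lex_cons_iff, lex_cons_cons_iff, sub_lt_sub_iff_right,
      sub_left_inj]
    rcases eq_or_ne b b' with rfl | hne
    · rw [ih b (by simpa using h), List.lex_cons_iff]
    · simp [hne]

theorem cw_nonneg (p q : Real.Angle) : 0 ≤ cw p q := by
  unfold cw
  split_ifs with h
  · exact h
  · linarith [Real.Angle.neg_pi_lt_toReal (q - p), Real.pi_pos]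

theorem cw_lt_two_pi (p q : Real.Angle) : cw p q < 2 * π := by
  unfold cw
  split_ifs with h
  · linarith [Real.Angle.toReal_le_pi (q - p), Real.pi_pos]
  · linarith

theorem add_cw (p q : Real.Angle) : p + (cw p q : Real.Angle) = q := by
  have : ((cw p q : ℝ) : Real.Angle) = q - p := by
    unfold cw
    split_ifs
    · exact Real.Angle.coe_toReal _
    · rw [Real.Angle.coe_add, Real.Angle.coe_two_pi, add_zero, Real.Angle.coe_toReal]
  rw [this, add_sub_cancel]

theorem angle_coe_injOn_Ico : Set.InjOn ((↑) : ℝ → Real.Angle) (Set.Ico 0 (2 * π)) :=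
  fun x hx y hy h =>
    haveI : Fact (0 < 2 * π) := ⟨Real.two_pi_pos⟩
    (AddCircle.coe_eq_coe_iff_of_mem_Ico (a := 0) (by simpa using hx) (by simpa using hy)).1 h

theorem cw_eq_iff {p q : Real.Angle} {t : ℝ} :
    cw p q = t ↔ (0 ≤ t ∧ t < 2 * π) ∧ p + t = q := by
  constructor
  · rintro rfl
    exact ⟨⟨cw_nonneg p q, cw_lt_two_pi p q⟩, add_cw p q⟩
  · rintro ⟨ht, rfl⟩
    exact angle_coe_injOn_Ico ⟨cw_nonneg _ _, cw_lt_two_pi _ _⟩ ht (add_left_cancel (add_cw _ _))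

theorem cw_self (p : Real.Angle) : cw p p = 0 :=
  cw_eq_iff.2 ⟨⟨le_rfl, Real.two_pi_pos⟩, by simp⟩

theorem cw_pos {p q : Real.Angle} (h : q ≠ p) : 0 < cw p q :=
  (cw_nonneg p q).lt_of_ne fun h0 => h (by rw [← add_cw p q, ← h0]; simp)

theorem cw_injective (p : Real.Angle) : Function.Injective (cw p) := fun q q' h => by
  rw [← add_cw p q, h, add_cw]

def view (S : Finset Real.Angle) (p : Real.Angle) : Finset ℝ := S.image (cw p)

theorem mem_view {S : Finset Real.Angle} {p : Real.Angle} {t : ℝ} :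
    t ∈ view S p ↔ (0 ≤ t ∧ t < 2 * π) ∧ p + t ∈ S := by
  simp only [view, Finset.mem_image, cw_eq_iff]
  constructor
  · rintro ⟨q, hq, ht, rfl⟩
    exact ⟨ht, hq⟩
  · rintro ⟨ht, hq⟩
    exact ⟨_, hq, ht, rfl⟩

theorem card_view (S : Finset Real.Angle) (p : Real.Angle) : (view S p).card = S.card :=
  Finset.card_image_of_injective S (cw_injective p)

theorem exists_dists_eq_zero_cons {S : Finset Real.Angle} {p : Real.Angle} (hp : p ∈ S) :
    ∃ l, dists S p = 0 :: l := by
  have h0 : (0 : ℝ) ∈ view S p := mem_view.2 ⟨⟨le_rfl, Real.two_pi_pos⟩, by simpa using hp⟩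
  have hmin : (view S p).min' ⟨0, h0⟩ = 0 :=
    le_antisymm ((view S p).min'_le 0 h0)
      ((view S p).le_min' _ _ fun t ht => (mem_view.1 ht).1.1)
  exact ⟨_, (sort_eq_min'_cons ⟨0, h0⟩).trans (by rw [hmin])⟩

theorem lexLt_gapSeq_iff {S T : Finset Real.Angle} {p q : Real.Angle} (hp : p ∈ S) (hq : q ∈ T)
    (hcard : S.card = T.card) :
    lexLt (gapSeq S p) (gapSeq T q) ↔ Beats (view S p) (view T q) := by
  obtain ⟨l₁, h₁⟩ := exists_dists_eq_zero_cons hp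
  obtain ⟨l₂, h₂⟩ := exists_dists_eq_zero_cons hq
  have hlen : l₁.length = l₂.length := by
    have e₁ : (dists S p).length = S.card := (Finset.length_sort _).trans (card_view S p)
    have e₂ : (dists T q).length = T.card := (Finset.length_sort _).trans (card_view T q)
    rw [h₁, List.length_cons] at e₁
    rw [h₂, List.length_cons] at e₂
    omega
  change List.Lex _ (gaps (2 * π) (dists S p)) (gaps (2 * π) (dists T q)) ↔ _
  rw [h₁, h₂, lex_gaps_iff _ _ hlen, ← h₁, ← h₂]
  exact lex_sort_iff_beats (F := view S p) (G := view T q) (by rw [card_view, card_view, hcard])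

theorem trueLeader_iff_beats {S : Finset Real.Angle} {p : Real.Angle} :
    TrueLeader S p ↔ p ∈ S ∧ ∀ q ∈ S, q ≠ p → Beats (view S p) (view S q) :=
  and_congr_right fun hp =>
    forall₂_congr fun _ hq => imp_congr_right fun _ => lexLt_gapSeq_iff hp hq rfl

theorem beats_view_iff {S T : Finset Real.Angle} {p q : Real.Angle} :
    Beats (view S p) (view T q) ↔ ∃ β : ℝ, (0 ≤ β ∧ β < 2 * π) ∧ p + β ∈ S ∧ q + β ∉ T ∧
      ∀ t : ℝ, 0 ≤ t → t < β → (p + t ∈ S ↔ q + t ∈ T) := by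
  constructor
  · rintro ⟨β, hβS, hβT, hagree⟩
    obtain ⟨hβ, hpβ⟩ := mem_view.1 hβS
    refine ⟨β, hβ, hpβ, fun h => hβT (mem_view.2 ⟨hβ, h⟩), fun t ht0 htβ => ?_⟩
    have ht : 0 ≤ t ∧ t < 2 * π := ⟨ht0, htβ.trans hβ.2⟩
    simpa only [mem_view, ht, true_and] using hagree t htβ
  · rintro ⟨β, hβ, hpβ, hqβ, hagree⟩
    refine ⟨β, mem_view.2 ⟨hβ, hpβ⟩, fun h => hqβ (mem_view.1 h).2, fun t htβ => ?_⟩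
    by_cases ht0 : 0 ≤ t
    · have ht : 0 ≤ t ∧ t < 2 * π := ⟨ht0, htβ.trans hβ.2⟩
      simpa only [mem_view, ht, true_and] using hagree t ht0 htβ
    · simp only [mem_view, ht0, false_and]

theorem antipode_antipode (p : Real.Angle) : antipode (antipode p) = p := by
  rw [antipode, antipode, add_assoc, Real.Angle.coe_pi_add_coe_pi, add_zero]

theorem cw_antipode (p : Real.Angle) : cw p (antipode p) = π :=
  cw_eq_iff.2 ⟨⟨Real.pi_pos.le, by linarith [Real.pi_pos]⟩, rfl⟩

theorem antipode_ne (p : Real.Angle) : antipode p ≠ p := fun h => by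
  have := cw_antipode p
  rw [h, cw_self] at this
  exact Real.pi_ne_zero this.symm

theorem eq_antipode_of_cw_eq_pi {p q : Real.Angle} (h : cw p q = π) : q = antipode p := by
  rw [← add_cw p q, h]; rfl

section FarAndNear

variable {p q : Real.Angle}

theorem cw_lt_pi_of_pi_lt_cw (h : π < cw p q) : cw q p < π := by
  have hq := add_cw p q
  set x := cw p q
  have : cw q p = 2 * π - x :=
    cw_eq_iff.2 ⟨⟨by linarith [cw_lt_two_pi p q], by linarith [Real.pi_pos]⟩, by
      rw [← hq, Real.Angle.coe_sub, Real.Angle.coe_two_pi]; abel⟩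
  linarith

theorem cw_antipode_lt_pi_of_cw_lt_pi (hqp : q ≠ p) (h : cw p q < π) : cw q (antipode p) < π := by
  have hx := cw_pos hqp
  have hq := add_cw p q
  set x := cw p q
  have : cw q (antipode p) = π - x :=
    cw_eq_iff.2 ⟨⟨by linarith, by linarith [Real.pi_pos]⟩, by
      rw [← hq, antipode, Real.Angle.coe_sub]; abel⟩
  linarith

theorem pi_lt_cw_antipode_of_pi_lt_cw (h : π < cw p q) : π < cw q (antipode p) := by
  have hx := cw_lt_two_pi p q
  have hq := add_cw p q
  set x := cw p q
  have : cw q (antipode p) = 2 * π + (π - x) :=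
    cw_eq_iff.2 ⟨⟨by linarith, by linarith⟩, by
      rw [← hq, antipode, Real.Angle.coe_add, Real.Angle.coe_two_pi, Real.Angle.coe_sub]; abel⟩
  linarith

theorem pi_lt_cw_antipode_left_of_cw_lt_pi (hqp : q ≠ p) (h : cw p q < π) :
    π < cw (antipode p) q := by
  have hx := cw_pos hqp
  have hq := add_cw p q
  set x := cw p q
  have : cw (antipode p) q = x + π :=
    cw_eq_iff.2 ⟨⟨by linarith [Real.pi_pos], by linarith⟩, by
      rw [← hq, antipode, Real.Angle.coe_add, add_add_add_comm, Real.Angle.coe_pi_add_coe_pi,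
        add_zero]⟩
  linarith

end FarAndNear

theorem add_mem_erase_iff {S : Finset Real.Angle} {p a : Real.Angle} {t : ℝ} (ht0 : 0 ≤ t)
    (ht : t < cw p a) : p + t ∈ S.erase a ↔ p + t ∈ S := by
  refine ⟨Finset.mem_of_mem_erase, fun h => Finset.mem_erase.2 ⟨fun hpa => ?_, h⟩⟩
  have := cw_eq_iff.2 ⟨⟨ht0, ht.trans (cw_lt_two_pi p a)⟩, hpa⟩
  linarith

section Leader

variable {S : Finset Real.Angle} {p q : Real.Angle}

/-- If the views of `p` and `q` agreed beyond `w = cw q p`, the point `p + w` would see from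
itself what `p` sees from `q`, and would beat `p`. -/
theorem TrueLeader.le_cw (hL : TrueLeader S p) (hqp : q ≠ p) {β : ℝ}
    (hβ : β < 2 * π) (hpβ : p + β ∈ S) (hqβ : q + β ∉ S)
    (hagree : ∀ t : ℝ, 0 ≤ t → t < β → (p + t ∈ S ↔ q + t ∈ S)) : β ≤ cw q p := by
  obtain ⟨hp, hbeats⟩ := trueLeader_iff_beats.1 hL
  by_contra! hlt
  have hw := cw_pos hqp.symm
  have hqw := add_cw q p
  set w := cw q p
  have hpw : p + w ∈ S := (hagree w hw.le hlt).2 (hqw ▸ hp)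
  have hpw_ne : p + w ≠ p := fun h => hw.ne' (by
    rw [← cw_eq_iff.2 ⟨⟨hw.le, hlt.trans hβ⟩, h⟩, cw_self])
  refine (hbeats _ hpw hpw_ne).asymm (beats_view_iff.2 ⟨β - w, ⟨by linarith, by linarith⟩, ?_, ?_,
    fun t ht0 htβ => ?_⟩)
  · rwa [Real.Angle.coe_sub, add_add_sub_cancel]
  · rwa [← hqw, Real.Angle.coe_sub, add_add_sub_cancel]
  · rw [add_assoc, ← Real.Angle.coe_add, hagree (w + t) (by linarith) (by linarith), ← hqw,
      Real.Angle.coe_add, add_assoc]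

theorem TrueLeader.erase_antipode (hL : TrueLeader S p) (ha : antipode p ∈ S) :
    TrueLeader (S.erase (antipode p)) p := by
  obtain ⟨hp, hbeats⟩ := trueLeader_iff_beats.1 hL
  refine trueLeader_iff_beats.2 ⟨Finset.mem_erase.2 ⟨(antipode_ne p).symm, hp⟩, fun q hq hqp => ?_⟩
  obtain ⟨hqa, hqS⟩ := Finset.mem_erase.1 hq
  obtain ⟨β, hβ, hpβ, hqβ, hagree⟩ := beats_view_iff.1 (hbeats q hqS hqp)
  have hqd := add_cw q (antipode p)
  set d := cw q (antipode p)
  have hd := cw_nonneg q (antipode p)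
  have hβd : β ≠ d := by rintro rfl; exact hqβ (hqd ▸ ha)
  have hsmall : β < π ∨ d < π := by
    rcases lt_trichotomy (cw p q) π with hx | hx | hx
    · exact .inr (cw_antipode_lt_pi_of_cw_lt_pi hqp hx)
    · exact absurd (eq_antipode_of_cw_eq_pi hx) hqa
    · exact .inl ((hL.le_cw hqp hβ.2 hpβ hqβ hagree).trans_lt (cw_lt_pi_of_pi_lt_cw hx))
  -- Removing `antipode p` only matters at distance `π` from `p` and at distance `d` from `q`,
  -- so the earlier of `β` and `d` is still a first difference.
  have hpt : ∀ t : ℝ, 0 ≤ t → t < π → (p + t ∈ S.erase (antipode p) ↔ p + t ∈ S) :=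
    fun t ht0 htπ => add_mem_erase_iff ht0 (by rwa [cw_antipode])
  have hqt : ∀ t : ℝ, 0 ≤ t → t < d → (q + t ∈ S.erase (antipode p) ↔ q + t ∈ S) :=
    fun t ht0 htd => add_mem_erase_iff ht0 htd
  rcases lt_or_gt_of_ne hβd with hlt | hgt
  · have hβπ : β < π := hsmall.elim id hlt.trans
    refine beats_view_iff.2 ⟨β, hβ, (hpt β hβ.1 hβπ).2 hpβ,
      fun hmem => hqβ (Finset.mem_of_mem_erase hmem), fun t ht0 htβ => ?_⟩
    rw [hpt t ht0 (htβ.trans hβπ), hqt t ht0 (htβ.trans hlt)]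
    exact hagree t ht0 htβ
  · have hdπ : d < π := hsmall.elim hgt.trans id
    refine beats_view_iff.2 ⟨d, ⟨hd, cw_lt_two_pi _ _⟩,
      (hpt d hd hdπ).2 ((hagree d hd hgt).2 (hqd ▸ ha)), by rw [hqd]; exact Finset.notMem_erase _ _,
      fun t ht0 htd => ?_⟩
    rw [hpt t ht0 (htd.trans hdπ), hqt t ht0 htd]
    exact hagree t ht0 (htd.trans hgt)

end Leader

section Antipodal

variable {S : Finset Real.Angle} {p q : Real.Angle}

theorem beats_of_beats_erase_antipode (ha : antipode p ∈ S) (hfar : π < cw p q)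
    (h : Beats (view (S.erase (antipode p)) p) (view (S.erase (antipode p)) q)) :
    Beats (view S p) (view S q) := by
  obtain ⟨β, hβ, hpβ, hqβ, hagree⟩ := beats_view_iff.1 h
  have hd := pi_lt_cw_antipode_of_pi_lt_cw hfar
  have hpt : ∀ t : ℝ, 0 ≤ t → t < π → (p + t ∈ S.erase (antipode p) ↔ p + t ∈ S) :=
    fun t ht0 htπ => add_mem_erase_iff ht0 (by rwa [cw_antipode])
  have hqt : ∀ t : ℝ, 0 ≤ t → t < π → (q + t ∈ S.erase (antipode p) ↔ q + t ∈ S) :=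
    fun t ht0 htπ => add_mem_erase_iff ht0 (htπ.trans hd)
  have hlift : ∀ t : ℝ, 0 ≤ t → t < π → t < β → (p + t ∈ S ↔ q + t ∈ S) :=
    fun t ht0 htπ htβ => by rw [← hpt t ht0 htπ, ← hqt t ht0 htπ]; exact hagree t ht0 htβ
  have hβπ : β ≠ π := by rintro rfl; exact Finset.notMem_erase _ _ hpβ
  rcases lt_or_gt_of_ne hβπ with hlt | hgt
  · exact beats_view_iff.2 ⟨β, hβ, Finset.mem_of_mem_erase hpβ,
      fun hmem => hqβ ((hqt β hβ.1 hlt).2 hmem), fun t ht0 htβ => hlift t ht0 (htβ.trans hlt) htβ⟩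
  · refine beats_view_iff.2 ⟨π, ⟨Real.pi_pos.le, by linarith [Real.pi_pos]⟩, ha,
      fun hmem => ?_, fun t ht0 htπ => hlift t ht0 htπ (htπ.trans hgt)⟩
    exact Finset.notMem_erase _ _
      ((hagree π Real.pi_pos.le hgt).2 ((add_mem_erase_iff Real.pi_pos.le hd).2 hmem))

theorem trueLeader_of_beats_antipode (hp : p ∈ S) (ha : antipode p ∈ S)
    (hL₁ : TrueLeader (S.erase (antipode p)) p) (hL₂ : TrueLeader (S.erase p) (antipode p))
    (h : Beats (view S p) (view S (antipode p))) : TrueLeader S p := by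
  refine trueLeader_iff_beats.2 ⟨hp, fun q hq hqp => ?_⟩
  rcases eq_or_ne q (antipode p) with rfl | hqa
  · exact h
  rcases lt_or_gt_of_ne (mt eq_antipode_of_cw_eq_pi hqa) with hnear | hfar
  · have hfar' := pi_lt_cw_antipode_left_of_cw_lt_pi hqp hnear
    have hbeats := (trueLeader_iff_beats.1 hL₂).2 q (Finset.mem_erase.2 ⟨hqp, hq⟩) hqa
    have key := beats_of_beats_erase_antipode (S := S) (p := antipode p) (q := q)
    rw [antipode_antipode] at key
    exact h.trans (key hp hfar' hbeats)
  · exact beats_of_beats_erase_antipode ha hfar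
      ((trueLeader_iff_beats.1 hL₁).2 q (Finset.mem_erase.2 ⟨hqa, hq⟩) hqp)

theorem view_ne_view_antipode (hasym : RotAsym S) (p : Real.Angle) :
    view S p ≠ view S (antipode p) := by
  intro h
  refine hasym π Real.Angle.pi_ne_zero (Finset.eq_of_subset_of_card_le ?_
    (Finset.card_image_of_injective S (add_left_injective _)).ge)
  intro x hx
  obtain ⟨s, hs, rfl⟩ := Finset.mem_image.1 hx
  have hmem : cw p s ∈ view S (antipode p) := h ▸ Finset.mem_image_of_mem (cw p) hs
  rw [mem_view, antipode, add_right_comm, add_cw] at hmem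
  exact hmem.2

theorem Undecided.trueLeader_erase_and_not_trueLeader (hU : Undecided S p)
    (ha : antipode p ∈ S) : TrueLeader (S.erase (antipode p)) p ∧ ¬ TrueLeader S p := by
  obtain ⟨-, -, -, hxor⟩ := hU
  rw [C0, C1, Finset.insert_eq_of_mem ha] at hxor
  rcases hxor with h | ⟨hL, hnot⟩
  · exact h
  · exact absurd (hL.erase_antipode ha) hnot

end Antipodal

theorem stmt11_general (S : Finset Real.Angle) (hasym : RotAsym S)
    (r₁ r₂ : Real.Angle)
    (hU1 : Undecided S r₁) (hU2 : Undecided S r₂) :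
    r₂ ≠ antipode r₁ := by
  rintro rfl
  have hr₁ : r₁ ∈ S := hU1.1
  have ha : antipode r₁ ∈ S := hU2.1
  obtain ⟨hL₁, hn₁⟩ := hU1.trueLeader_erase_and_not_trueLeader ha
  obtain ⟨hL₂, hn₂⟩ := hU2.trueLeader_erase_and_not_trueLeader (by rwa [antipode_antipode])
  rw [antipode_antipode] at hL₂
  rcases Beats.total (view_ne_view_antipode hasym r₁) with h | h
  · exact hn₁ (trueLeader_of_beats_antipode hr₁ ha hL₁ hL₂ h)
  · have key := trueLeader_of_beats_antipode (S := S) (p := antipode r₁)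
    rw [antipode_antipode] at key
    exact hn₂ (key ha hr₁ hL₂ hL₁ h)

theorem stmt11 (S : Finset Real.Angle) (hasym : RotAsym S)
    (r₁ r₂ : Real.Angle) (hne : r₁ ≠ r₂)
    (hU1 : Undecided S r₁) (hU2 : Undecided S r₂) :
    r₂ ≠ antipode r₁ :=
  stmt11_general S hasym r₁ r₂ hU1 hU2
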